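/- arXiv:1908.08823 — 15 statements merged into one kernel-verified Lean document; each statement's English description precedes it below -/
import Mathlib

section
/- If f is a coherent choice function and f(A) ⊆ B ⊆ A, then f(B) = f(A) (Cumulativity). -/
variable {α : Type*} [DecidableEq α] [Fintype α]

def Coherent (f : Finset α → Finset α) : Prop :=
  (∀ A, f A ⊆ A) ∧
  (∀ A x, x ∈ A → x ∉ f A → f (A.erase x) ⊆ f A) ∧
  (∀ A B x, B ⊆ A → x ∈ B → x ∈ f A → x ∈ f B)

theorem cumulativity (f : Finset α → Finset α) (hf : Coherent f)
    (A B : Finset α) (h1 : f A ⊆ B) (h2 : B ⊆ A) : f B = f A := by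
  revert h1 h2
  induction A using Finset.strongInduction with
  | _ A ih =>
    intro h1 h2
    by_cases hBA : B = A
    · subst hBA; rfl
    · obtain ⟨x, hxA, hxB⟩ : ∃ x, x ∈ A ∧ x ∉ B := by
        obtain ⟨x, hx1, hx2⟩ := Finset.exists_of_ssubset (lt_of_le_of_ne h2 hBA)
        exact ⟨x, hx1, hx2⟩
      have hxf : x ∉ f A := fun h => hxB (h1 h)
      have hsub : f (A.erase x) ⊆ f A := hf.2.1 A x hxA hxf
      have hsup : f A ⊆ f (A.erase x) := fun y hy =>
        hf.2.2 A (A.erase x) y (Finset.erase_subset x A)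
          (Finset.mem_erase.mpr ⟨fun he => hxf (he ▸ hy), hf.1 A hy⟩) hy
      have heq : f (A.erase x) = f A := Finset.Subset.antisymm hsub hsup
      have hB : B ⊆ A.erase x := Finset.subset_erase.mpr ⟨h2, hxB⟩
      have := ih (A.erase x) (Finset.erase_ssubset hxA) (heq ▸ h1) hB
      rw [this, heq]
end

section
/- If f is a coherent choice function, then f is idempotent: f(f(A)) = f(A) for all A ⊆ X. -/
variable {α : Type*} [DecidableEq α] [Fintype α]

theorem idempotence (f : Finset α → Finset α) (hf : Coherent f)
    (A : Finset α) : f (f A) = f A := by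
  obtain ⟨h1, _, h3⟩ := hf
  exact Finset.Subset.antisymm (h1 _) (fun x hx => h3 A (f A) x (h1 A) hx hx)
end

section
/- If f is a coherent choice function, then for all A, B ⊆ X, f(A ∪ B) ⊆ f(A) ∪ f(B). -/
variable {α : Type*} [DecidableEq α] [Fintype α]

theorem union_subset_union (f : Finset α → Finset α) (hf : Coherent f)
    (A B : Finset α) : f (A ∪ B) ⊆ f A ∪ f B := by
  intro x hx
  obtain ⟨h1, _, h3⟩ := hf
  rcases Finset.mem_union.mp (h1 _ hx) with h | h
  · exact Finset.mem_union_left _ (h3 _ A x Finset.subset_union_left h hx)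
  · exact Finset.mem_union_right _ (h3 _ B x Finset.subset_union_right h hx)
end

section
/- If f is a coherent choice function, B ⊆ A ⊆ X, and f(A) = A, then f(B) = B (any subset of a fixpoint is a fixpoint). -/
variable {α : Type*} [DecidableEq α] [Fintype α]

theorem subset_of_fixpoint (f : Finset α → Finset α) (hf : Coherent f)
    (A B : Finset α) (hBA : B ⊆ A) (hA : f A = A) : f B = B := by
  refine subset_antisymm (hf.1 B) fun x hx => ?_
  exact hf.2.2 A B x hBA hx (by rw [hA]; exact hBA hx)
end

section
/- A choice function f is coherent if and only if it satisfies Contraction and path independence: f(A ∪ B) = f(f(A) ∪ B) for all A, B ⊆ X. -/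
variable {α : Type*} [DecidableEq α] [Fintype α]

lemma coherent_key (f : Finset α → Finset α)
    (hc : ∀ A, f A ⊆ A)
    (hi : ∀ A x, x ∈ A → x ∉ f A → f (A.erase x) ⊆ f A)
    (hs : ∀ A B x, B ⊆ A → x ∈ B → x ∈ f A → x ∈ f B) :
    ∀ n A C, (A \ C).card = n → f A ⊆ C → C ⊆ A → f C = f A := by
  intro n
  induction n with
  | zero =>
    intro A C h h1 h2
    have hAC : A ⊆ C := by
      intro a ha
      by_contra hac
      exact absurd (Finset.card_eq_zero.mp h ▸ Finset.mem_sdiff.mpr ⟨ha, hac⟩)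
        (Finset.notMem_empty a)
    rw [Finset.Subset.antisymm hAC h2]
  | succ n ih =>
    intro A C h h1 h2
    obtain ⟨x, hx⟩ : (A \ C).Nonempty := by
      rw [← Finset.card_pos, h]; omega
    have hxA : x ∈ A := (Finset.mem_sdiff.mp hx).1
    have hxC : x ∉ C := (Finset.mem_sdiff.mp hx).2
    have hxf : x ∉ f A := fun h' => hxC (h1 h')
    have heq : f (A.erase x) = f A := by
      apply Finset.Subset.antisymm (hi A x hxA hxf)
      intro y hy
      exact hs A (A.erase x) y (Finset.erase_subset _ _)
        (Finset.mem_erase.mpr ⟨fun e => hxf (e ▸ hy), hc A hy⟩) hy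
    have hcard : ((A.erase x) \ C).card = n := by
      have : (A.erase x) \ C = (A \ C).erase x := by
        ext a; simp [Finset.mem_sdiff, Finset.mem_erase]; tauto
      rw [this, Finset.card_erase_of_mem hx, h]; omega
    have hsub2 : C ⊆ A.erase x := fun a ha =>
      Finset.mem_erase.mpr ⟨fun e => hxC (e ▸ ha), h2 ha⟩
    rw [ih (A.erase x) C hcard (heq ▸ h1) hsub2, heq]

theorem coherent_iff_path_independent (f : Finset α → Finset α) :
    Coherent f ↔
    ((∀ A, f A ⊆ A) ∧ (∀ A B, f (A ∪ B) = f (f A ∪ B))) := by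
  constructor
  · rintro ⟨hc, hi, hs⟩
    refine ⟨hc, fun A B => ?_⟩
    have h1 : f (A ∪ B) ⊆ f A ∪ B := by
      intro y hy
      rcases Finset.mem_union.mp (hc _ hy) with hA | hB
      · exact Finset.mem_union_left _ (hs (A ∪ B) A y Finset.subset_union_left hA hy)
      · exact Finset.mem_union_right _ hB
    have h2 : f A ∪ B ⊆ A ∪ B :=
      Finset.union_subset_union_left (hc A)
    exact (coherent_key f hc hi hs _ (A ∪ B) (f A ∪ B) rfl h1 h2).symm
  · rintro ⟨hc, hpi⟩
    refine ⟨hc, ?_, ?_⟩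
    · intro A x hxA hxf
      have hfA : f A ⊆ A.erase x := fun y hy =>
        Finset.mem_erase.mpr ⟨fun e => hxf (e ▸ hy), hc A hy⟩
      have hAeq : A ∪ A.erase x = A := Finset.union_eq_left.mpr (Finset.erase_subset _ _)
      have : f A = f (A.erase x) := by
        have := hpi A (A.erase x)
        rw [hAeq, Finset.union_eq_right.mpr hfA] at this
        exact this
      rw [← this]
    · intro A B x hBA hxB hxfA
      have hAeq : B ∪ A = A := Finset.union_eq_right.mpr hBA
      have := hpi B A
      rw [hAeq] at this
      have hx' : x ∈ f (f B ∪ A) := this ▸ hxfA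
      have hmem : x ∈ f B ∪ A := hc _ hx'
      -- show x ∈ f B: if not, x ∈ A; but we need more
      have hAeq2 : B ∪ (A \ B) = A := Finset.union_sdiff_of_subset hBA
      have h2 := hpi B (A \ B)
      rw [hAeq2] at h2
      have hx2 : x ∈ f (f B ∪ (A \ B)) := h2 ▸ hxfA
      rcases Finset.mem_union.mp (hc _ hx2) with h | h
      · exact h
      · exact absurd hxB (Finset.mem_sdiff.mp h).2
end

section
/- A choice function f satisfying Contraction satisfies f(A ∪ B) = f(f(A) ∪ B) for all A, B if and only if it satisfies f(A ∪ B) = f(f(A) ∪ f(B)) for all A, B. -/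
variable {α : Type*} [DecidableEq α] [Fintype α]

theorem path_independence_equiv (f : Finset α → Finset α)
    (hc : ∀ A, f A ⊆ A) :
    (∀ A B, f (A ∪ B) = f (f A ∪ B)) ↔
    (∀ A B, f (A ∪ B) = f (f A ∪ f B)) := by
  constructor
  · intro h A B
    calc f (A ∪ B) = f (f A ∪ B) := h A B
    _ = f (B ∪ f A) := by rw [Finset.union_comm]
    _ = f (f B ∪ f A) := h B (f A)
    _ = f (f A ∪ f B) := by rw [Finset.union_comm]
  · intro h
    have idem : ∀ A, f (f A) = f A := by
      intro A
      have := h A A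
      simp at this
      exact this.symm
    intro A B
    calc f (A ∪ B) = f (f A ∪ f B) := h A B
    _ = f (f (f A) ∪ f B) := by rw [idem]
    _ = f (f A ∪ B) := (h (f A) B).symm
end

section
/- For a coherent choice function f, the relation B ≤_f A defined by f(A ∪ B) = f(A) is transitive. -/
variable {α : Type*} [DecidableEq α] [Fintype α]

lemma erase_step (f : Finset α → Finset α) (hf : Coherent f) (A : Finset α) (x : α)
    (hx : x ∈ A) (hnx : x ∉ f A) : f (A.erase x) = f A := by
  refine Finset.Subset.antisymm (hf.2.1 A x hx hnx) ?_
  intro y hy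
  exact hf.2.2 A (A.erase x) y (Finset.erase_subset x A)
    (Finset.mem_erase.2 ⟨fun h => hnx (h ▸ hy), hf.1 A hy⟩) hy

lemma outcast (f : Finset α → Finset α) (hf : Coherent f) :
    ∀ A B : Finset α, f A ⊆ B → B ⊆ A → f B = f A := by
  intro A
  induction A using Finset.strongInduction with
  | _ A ih =>
    intro B hfB hBA
    by_cases hAB : A ⊆ B
    · rw [Finset.Subset.antisymm hBA hAB]
    · obtain ⟨x, hxA, hxB⟩ := Finset.not_subset.1 hAB
      have hnx : x ∉ f A := fun h => hxB (hfB h)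
      have hstep := erase_step f hf A x hxA hnx
      have := ih (A.erase x) (Finset.erase_ssubset hxA) B
        (hstep ▸ hfB) (Finset.subset_erase.2 ⟨hBA, hxB⟩)
      rw [this, hstep]

theorem leq_f_transitive (f : Finset α → Finset α) (hf : Coherent f)
    (A B C : Finset α) (hCB : f (B ∪ C) = f B) (hBA : f (A ∪ B) = f A) :
    f (A ∪ C) = f A := by
  set D := A ∪ B ∪ C with hD
  have h1 : f D ⊆ A ∪ B := by
    intro x hx
    by_cases hxAB : x ∈ A ∪ B
    · exact hxAB
    · have hxD : x ∈ D := hf.1 D hx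
      have hxC : x ∈ B ∪ C := by
        rw [hD, Finset.union_assoc] at hxD
        rcases Finset.mem_union.1 hxD with h | h
        · exact absurd (Finset.mem_union_left B h) hxAB
        · exact h
      have hxB : x ∈ f (B ∪ C) := hf.2.2 D (B ∪ C) x
        (by rw [hD, Finset.union_assoc]; exact Finset.subset_union_right) hxC hx
      rw [hCB] at hxB
      exact absurd (Finset.mem_union_right A (hf.1 B hxB)) hxAB
  have hsub1 : A ∪ B ⊆ D := by intro x hx; rw [hD]; simp at hx ⊢; tauto
  have hsub2 : A ∪ C ⊆ D := by intro x hx; rw [hD]; simp at hx ⊢; tauto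
  have hDA : f D = f A := (outcast f hf D (A ∪ B) h1 hsub1).symm.trans hBA
  have h2 : f D ⊆ A ∪ C := by
    rw [hDA]; exact (hf.1 A).trans Finset.subset_union_left
  rw [outcast f hf D (A ∪ C) h2 hsub2, hDA]
end

section
/- For a coherent choice function f, B ≤_f A holds iff f(A ∪ B) ⊆ f(A) iff f(A ∪ B) ⊆ A. -/
variable {α : Type*} [DecidableEq α] [Fintype α]

lemma aux_coherent (f : Finset α → Finset α) (hf : Coherent f) (A : Finset α) :
    ∀ n (S : Finset α), S.card = n → A ⊆ S → f S ⊆ A → f A ⊆ f S := by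
  intro n
  induction n with
  | zero => intro S hc hAS _; simp [Finset.card_eq_zero.mp hc] at hAS ⊢; simp [hAS]
  | succ n ih =>
    intro S hc hAS hfSA
    by_cases hSA : S = A
    · simp [hSA]
    · obtain ⟨x, hxS, hxA⟩ : ∃ x ∈ S, x ∉ A := by
        by_contra h; push_neg at h
        exact hSA (Finset.Subset.antisymm h hAS)
      have hxf : x ∉ f S := fun h => hxA (hfSA h)
      have h1 : f (S.erase x) ⊆ f S := hf.2.1 S x hxS hxf
      have hAe : A ⊆ S.erase x := fun y hy =>
        Finset.mem_erase.mpr ⟨fun he => hxA (he ▸ hy), hAS hy⟩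
      have := ih (S.erase x) (by rw [Finset.card_erase_of_mem hxS, hc]; rfl) hAe
        (h1.trans hfSA)
      exact this.trans h1

theorem leq_f_equiv (f : Finset α → Finset α) (hf : Coherent f)
    (A B : Finset α) :
    (f (A ∪ B) = f A ↔ f (A ∪ B) ⊆ f A) ∧
    (f (A ∪ B) ⊆ f A ↔ f (A ∪ B) ⊆ A) := by
  constructor
  · constructor
    · intro h; rw [h]
    · intro h
      refine Finset.Subset.antisymm h ?_
      exact aux_coherent f hf A (A ∪ B).card (A ∪ B) rfl Finset.subset_union_left
        (h.trans (hf.1 A))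
  · constructor
    · intro h; exact h.trans (hf.1 A)
    · intro h x hx
      exact hf.2.2 (A ∪ B) A x Finset.subset_union_left (h hx) hx
end

section
/- For a coherent choice function f and sets A, B with B ≤_f A: if x ∈ f({x} ∪ A) then x ∈ f({x} ∪ B). -/
variable {α : Type*} [DecidableEq α] [Fintype α]

lemma outcast_aux (f : Finset α → Finset α) (hf : Coherent f) :
    ∀ n (C S : Finset α), (C \ S).card = n → f C ⊆ S → S ⊆ C → f S = f C := by
  intro n
  induction n with
  | zero =>
    intro C S hcard hfc hsc
    have : C \ S = ∅ := Finset.card_eq_zero.mp hcard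
    have : C ⊆ S := fun z hz => by
      by_contra hzS
      exact absurd (Finset.mem_sdiff.mpr ⟨hz, hzS⟩) (by simp [this])
    rw [Finset.Subset.antisymm hsc this]
  | succ n ih =>
    intro C S hcard hfc hsc
    obtain ⟨y, hy⟩ : (C \ S).Nonempty := Finset.card_pos.mp (by omega)
    obtain ⟨hyC, hyS⟩ := Finset.mem_sdiff.mp hy
    have hynf : y ∉ f C := fun h => hyS (hfc h)
    have h1 : f (C.erase y) ⊆ f C := hf.2.1 C y hyC hynf
    have h2 : f C ⊆ f (C.erase y) := fun z hz =>
      hf.2.2 C (C.erase y) z (Finset.erase_subset y C)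
        (Finset.mem_erase.mpr ⟨fun he => hynf (he ▸ hz), hf.1 C hz⟩) hz
    have heq : f (C.erase y) = f C := Finset.Subset.antisymm h1 h2
    have hS : S ⊆ C.erase y := fun z hz =>
      Finset.mem_erase.mpr ⟨fun he => hyS (he ▸ hz), hsc hz⟩
    have hcard' : (C.erase y \ S).card = n := by
      have : C.erase y \ S = (C \ S).erase y := by
        ext z; simp [Finset.mem_erase, Finset.mem_sdiff]; tauto
      rw [this, Finset.card_erase_of_mem hy, hcard]
      omega
    have := ih (C.erase y) S hcard' (heq ▸ hfc) hS
    rw [this, heq]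

theorem substitutes_leq (f : Finset α → Finset α) (hf : Coherent f)
    (A B : Finset α) (hBA : f (A ∪ B) = f A) (x : α)
    (hx : x ∈ f (insert x A)) : x ∈ f (insert x B) := by
  set C := insert x (A ∪ B) with hC
  have hxC : x ∈ f C := by
    by_contra hxc
    have hfCD : f C = f (A ∪ B) := by
      by_cases hxAB : x ∈ A ∪ B
      · rw [hC, Finset.insert_eq_self.mpr hxAB]
      · have herase : C.erase x = A ∪ B := by
          rw [hC, Finset.erase_insert hxAB]
        have h1 : f (C.erase x) ⊆ f C :=
          hf.2.1 C x (Finset.mem_insert_self x _) hxc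
        have h2 : f C ⊆ f (C.erase x) := fun z hz =>
          hf.2.2 C (C.erase x) z (Finset.erase_subset x C)
            (Finset.mem_erase.mpr ⟨fun he => hxc (he ▸ hz), hf.1 C hz⟩) hz
        rw [← herase, Finset.Subset.antisymm h1 h2]
    have hfCA : f C = f A := hfCD.trans hBA
    have hsub1 : f C ⊆ insert x A := by
      rw [hfCA]
      exact (hf.1 A).trans (Finset.subset_insert x A)
    have hsub2 : insert x A ⊆ C :=
      Finset.insert_subset_insert x Finset.subset_union_left
    have := outcast_aux f hf (C \ insert x A).card C (insert x A) rfl hsub1 hsub2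
    rw [this] at hx
    exact hxc hx
  exact hf.2.2 C (insert x B) x
    (Finset.insert_subset_insert x Finset.subset_union_right)
    (Finset.mem_insert_self x B) hxC
end

section
/- For a coherent choice function f and the operator I_f(A) = A ∪ {x ∈ X \ A : x ∉ f({x} ∪ A)}: f(I_f(A)) = f(A). -/
variable {α : Type*} [DecidableEq α] [Fintype α]

def If (f : Finset α → Finset α) (A : Finset α) : Finset α :=
  A ∪ Finset.univ.filter (fun x => x ∉ A ∧ x ∉ f (insert x A))

lemma f_union_eq (f : Finset α → Finset α) (hf : Coherent f) (A : Finset α)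
    (S : Finset α) (hS : ∀ x ∈ S, x ∉ A ∧ x ∉ f (insert x A)) :
    f (A ∪ S) = f A := by
  induction S using Finset.induction_on with
  | empty => simp
  | @insert x s hx ih =>
    obtain ⟨hxA, hxf⟩ := hS x (Finset.mem_insert_self x s)
    have hB : A ∪ insert x s = insert x (A ∪ s) := Finset.union_insert x A s
    set B := insert x (A ∪ s) with hBdef
    have hsub : insert x A ⊆ B := by
      intro y hy
      rcases Finset.mem_insert.mp hy with h | h
      · exact h ▸ Finset.mem_insert_self x _
      · exact Finset.mem_insert_of_mem (Finset.mem_union_left _ h)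
    have hxB : x ∉ f B := fun h =>
      hxf (hf.2.2 B (insert x A) x hsub (Finset.mem_insert_self x A) h)
    have herase : B.erase x = A ∪ s := by
      rw [hBdef, Finset.erase_insert]
      simp [Finset.mem_union, hxA, hx]
    have h1 : f (A ∪ s) ⊆ f B := by
      rw [← herase]; exact hf.2.1 B x (Finset.mem_insert_self x _) hxB
    have h2 : f B ⊆ f (A ∪ s) := by
      intro y hy
      have hyB : y ∈ B := hf.1 B hy
      have hyx : y ≠ x := fun h => hxB (h ▸ hy)
      have hyAs : y ∈ A ∪ s := by
        rcases Finset.mem_insert.mp hyB with h | h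
        · exact absurd h hyx
        · exact h
      exact hf.2.2 B (A ∪ s) y (Finset.subset_insert x _) hyAs hy
    have : f B = f (A ∪ s) := Finset.Subset.antisymm h2 h1
    rw [hB, this, ih (fun y hy => hS y (Finset.mem_insert_of_mem hy))]

theorem f_If_eq (f : Finset α → Finset α) (hf : Coherent f)
    (A : Finset α) : f (If f A) = f A := by
  apply f_union_eq f hf A
  intro x hx
  simpa using (Finset.mem_filter.mp hx).2
end

section
/- For a coherent choice function f, the operator I_f is idempotent: I_f(I_f(A)) = I_f(A) for all A ⊆ X. -/
variable {α : Type*} [DecidableEq α] [Fintype α]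

theorem If_idempotent (f : Finset α → Finset α) (hf : Coherent f)
    (A : Finset α) : If f (If f A) = If f A := by
  obtain ⟨h1, h2, h3⟩ := hf
  -- key lemma: adding "outcast" elements keeps f (insert x A) inside
  have key : ∀ (x : α) (T : Finset α), x ∉ T →
      (∀ y ∈ T, y ∉ A ∧ y ∉ f (insert y A)) →
      f (insert x A) ⊆ f (insert x A ∪ T) := by
    intro x T
    induction T using Finset.induction_on with
    | empty => intro _ _; simp
    | @insert y T' hyT ih =>
      intro hxT hall
      have hy := hall y (Finset.mem_insert_self y T')
      have hxT' : x ∉ T' := fun h => hxT (Finset.mem_insert_of_mem h)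
      have hxy : x ≠ y := fun h => hxT (h ▸ Finset.mem_insert_self y T')
      have ihs : f (insert x A) ⊆ f (insert x A ∪ T') :=
        ih hxT' (fun z hz => hall z (Finset.mem_insert_of_mem hz))
      set D : Finset α := insert x A ∪ insert y T' with hD
      have hyD : y ∈ D := Finset.mem_union_right _ (Finset.mem_insert_self y T')
      have hyfD : y ∉ f D := by
        intro hyf
        exact hy.2 (h3 D (insert y A) y
          (by
            intro z hz
            rcases Finset.mem_insert.mp hz with rfl | hz
            · exact hyD
            · exact Finset.mem_union_left _ (Finset.mem_insert_of_mem hz))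
          (Finset.mem_insert_self y A) hyf)
      have herase : D.erase y = insert x A ∪ T' := by
        ext z
        simp only [hD, Finset.mem_erase, Finset.mem_union, Finset.mem_insert]
        constructor
        · rintro ⟨hzy, (rfl | hz) | (rfl | hz)⟩
          · exact Or.inl (Or.inl rfl)
          · exact Or.inl (Or.inr hz)
          · exact absurd rfl hzy
          · exact Or.inr hz
        · rintro ((rfl | hz) | hz)
          · exact ⟨hxy, Or.inl (Or.inl rfl)⟩
          · refine ⟨fun h => hy.1 (h ▸ hz), Or.inl (Or.inr hz)⟩
          · refine ⟨fun h => hyT (h ▸ hz), Or.inr (Or.inr hz)⟩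
      have := h2 D y hyD hyfD
      rw [herase] at this
      exact ihs.trans this
  have hF : ∀ y ∈ Finset.univ.filter (fun x => x ∉ A ∧ x ∉ f (insert x A)),
      y ∉ A ∧ y ∉ f (insert y A) := by
    intro y hy
    exact (Finset.mem_filter.mp hy).2
  have hIf : ∀ x, x ∉ If f A →
      insert x (If f A) = insert x A ∪ Finset.univ.filter (fun z => z ∉ A ∧ z ∉ f (insert z A)) := by
    intro x _
    simp only [If, Finset.insert_union]
  apply Finset.Subset.antisymm
  · intro x hx
    rcases Finset.mem_union.mp hx with hx | hx
    · exact hx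
    · obtain ⟨hx1, hx2⟩ := (Finset.mem_filter.mp hx).2
      by_contra hxmem
      -- x ∉ If f A, so x ∉ A and x ∈ f (insert x A)
      have hxA : x ∉ A := fun h => hx1 (Finset.mem_union_left _ h)
      have hxf : x ∈ f (insert x A) := by
        by_contra hxf
        exact hx1 (Finset.mem_union_right _ (Finset.mem_filter.mpr
          ⟨Finset.mem_univ x, hxA, hxf⟩))
      have hxFnot : x ∉ Finset.univ.filter (fun z => z ∉ A ∧ z ∉ f (insert z A)) :=
        fun h => hx1 (Finset.mem_union_right _ h)
      have := key x _ hxFnot hF hxf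
      rw [← hIf x hx1] at this
      exact hx2 this
  · intro x hx
    exact Finset.mem_union_left _ hx
end

section
/- For a coherent choice function f and all A, B ⊆ X: A ≤_f B if and only if A ⊆ I_f(B). -/
variable {α : Type*} [DecidableEq α] [Fintype α]

lemma coherent_key_s15 (f : Finset α → Finset α) (hf : Coherent f) (S : Finset α) :
    ∀ S', S' ⊆ S → f S ⊆ S' → f S' ⊆ f S := by
  induction S using Finset.strongInductionOn with
  | _ S ih =>
    intro S' hsub hfs
    by_cases h : S ⊆ S'
    · have : S = S' := Finset.Subset.antisymm h hsub
      subst this; exact subset_rfl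
    · obtain ⟨y, hyS, hyS'⟩ := Finset.not_subset.mp h
      have hy : y ∉ f S := fun hm => hyS' (hfs hm)
      have h2 : f (S.erase y) ⊆ f S := hf.2.1 S y hyS hy
      have hss : S.erase y ⊂ S := Finset.erase_ssubset hyS
      have hsub' : S' ⊆ S.erase y := Finset.subset_erase.mpr ⟨hsub, hyS'⟩
      have hfs' : f (S.erase y) ⊆ S' := h2.trans hfs
      exact (ih _ hss S' hsub' hfs').trans h2

theorem leq_iff_subset_If (f : Finset α → Finset α) (hf : Coherent f)
    (A B : Finset α) : f (B ∪ A) = f B ↔ A ⊆ If f B := by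
  obtain ⟨h1, h2, h3⟩ := hf
  constructor
  · intro heq x hxA
    by_cases hxB : x ∈ B
    · exact Finset.mem_union_left _ hxB
    · refine Finset.mem_union_right _ (Finset.mem_filter.mpr ⟨Finset.mem_univ x, hxB, ?_⟩)
      have hfB : f (B ∪ A) ⊆ insert x B := by
        rw [heq]; exact (h1 B).trans (Finset.subset_insert x B)
      have hsub : insert x B ⊆ B ∪ A := by
        intro y hy
        rcases Finset.mem_insert.mp hy with rfl | hy
        · exact Finset.mem_union_right _ hxA
        · exact Finset.mem_union_left _ hy
      have := coherent_key_s15 f ⟨h1, h2, h3⟩ (B ∪ A) (insert x B) hsub hfB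
      intro hx
      have : x ∈ f B := heq ▸ this hx
      exact hxB (h1 B this)
  · intro hAI
    have hfBA : f (B ∪ A) ⊆ B := by
      intro x hx
      by_contra hxB
      have hxBA : x ∈ B ∪ A := h1 _ hx
      have hxA : x ∈ A := (Finset.mem_union.mp hxBA).resolve_left hxB
      have hsub : insert x B ⊆ B ∪ A := by
        intro y hy
        rcases Finset.mem_insert.mp hy with rfl | hy
        · exact Finset.mem_union_right _ hxA
        · exact Finset.mem_union_left _ hy
      have hxf : x ∈ f (insert x B) :=
        h3 (B ∪ A) (insert x B) x hsub (Finset.mem_insert_self x B) hx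
      have := hAI hxA
      rcases Finset.mem_union.mp this with h | h
      · exact hxB h
      · exact (Finset.mem_filter.mp h).2.2 hxf
    apply Finset.Subset.antisymm
    · intro x hx
      exact h3 (B ∪ A) B x Finset.subset_union_left (hfBA hx) hx
    · exact coherent_key_s15 f ⟨h1, h2, h3⟩ (B ∪ A) B Finset.subset_union_left hfBA
end

section
/- If each individual choice function f_i (for i in a side S) on its own contract set X_i is coherent, then the aggregated choice function f_S(A) = ⋃_{i∈S} f_i(A ∩ X_i) is coherent. -/
variable {α : Type*} [DecidableEq α] [Fintype α]

theorem aggregation_coherent {ι : Type*} [Fintype ι] [DecidableEq ι]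
    (owner : α → ι) (f : ι → Finset α → Finset α)
    (hcoh : ∀ i, Coherent (f i)) :
    Coherent (fun A : Finset α =>
      Finset.univ.biUnion (fun i => f i (A.filter (fun x => owner x = i)))) := by
  refine ⟨?_, ?_, ?_⟩
  · intro A y hy
    simp only [Finset.mem_biUnion, Finset.mem_univ, true_and] at hy
    obtain ⟨i, hi⟩ := hy
    exact Finset.filter_subset _ _ ((hcoh i).1 _ hi)
  · intro A x hxA hxf y hy
    simp only [Finset.mem_biUnion, Finset.mem_univ, true_and] at hy hxf ⊢
    push_neg at hxf
    obtain ⟨i, hi⟩ := hy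
    refine ⟨i, ?_⟩
    by_cases h : owner x = i
    · have heq : (A.erase x).filter (fun z => owner z = i)
          = (A.filter (fun z => owner z = i)).erase x := by
        ext z
        simp only [Finset.mem_filter, Finset.mem_erase]
        tauto
      rw [heq] at hi
      exact (hcoh i).2.1 _ x (by simp [hxA, h]) (hxf i) hi
    · have heq : (A.erase x).filter (fun z => owner z = i)
          = A.filter (fun z => owner z = i) := by
        ext z
        simp only [Finset.mem_filter, Finset.mem_erase]
        constructor
        · tauto
        · rintro ⟨hz, ho⟩
          exact ⟨⟨fun hzx => h (hzx ▸ ho), hz⟩, ho⟩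
      rw [heq] at hi
      exact hi
  · intro A B x hBA hxB hx
    simp only [Finset.mem_biUnion, Finset.mem_univ, true_and] at hx ⊢
    obtain ⟨i, hi⟩ := hx
    have hox : owner x = i := (Finset.mem_filter.mp ((hcoh i).1 _ hi)).2
    exact ⟨i, (hcoh i).2.2 _ _ x (Finset.filter_subset_filter _ hBA)
      (Finset.mem_filter.mpr ⟨hxB, hox⟩) hi⟩
end

section
/- Let f_1, f_2 be coherent choice functions on X, let Z_0 = X and Z_{j+1} = (Z_j \ f_1(Z_j)) ∪ f_2(f_1(Z_j)). Then the sequence (Z_j) is weakly decreasing: Z_{j+1} ⊆ Z_j for all j, and since X is finite there exists an index j with Z_{j+1} = Z_j. Moreover, for every j, f_2(f_1(Z_j)) ⊆ f_1(Z_{j+1}). -/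
variable {α : Type*} [DecidableEq α] [Fintype α]

theorem iteration_properties (f₁ f₂ : Finset α → Finset α)
    (h₁ : Coherent f₁) (h₂ : Coherent f₂)
    (Z : ℕ → Finset α) (hZ0 : Z 0 = Finset.univ)
    (hZ : ∀ j, Z (j + 1) = (Z j \ f₁ (Z j)) ∪ f₂ (f₁ (Z j))) :
    (∀ j, Z (j + 1) ⊆ Z j) ∧ (∃ j, Z (j + 1) = Z j) ∧
    (∀ j, f₂ (f₁ (Z j)) ⊆ f₁ (Z (j + 1))) := by
  obtain ⟨h1c, h1i, h1s⟩ := h₁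
  obtain ⟨h2c, h2i, h2s⟩ := h₂
  have hdec : ∀ j, Z (j + 1) ⊆ Z j := by
    intro j x hx
    rw [hZ j] at hx
    rcases Finset.mem_union.1 hx with h | h
    · exact (Finset.sdiff_subset) h
    · exact h1c _ (h2c _ h)
  refine ⟨hdec, ?_, ?_⟩
  · by_contra hne
    push_neg at hne
    have key : ∀ n, (Z n).card + n ≤ Fintype.card α := by
      intro n
      induction n with
      | zero => simp [hZ0]
      | succ n ih =>
        have hss : Z (n + 1) ⊂ Z n := (hdec n).ssubset_of_ne (hne n)
        have : (Z (n + 1)).card < (Z n).card := Finset.card_lt_card hss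
        omega
    have := key (Fintype.card α + 1)
    omega
  · intro j x hx
    have hxf1 : x ∈ f₁ (Z j) := h2c _ hx
    have hxZ : x ∈ Z (j + 1) := by
      rw [hZ j]; exact Finset.mem_union_right _ hx
    exact h1s _ _ _ (hdec j) hxZ hxf1
end

section
/- Let f_1, f_2 be coherent choice functions on X and let Z_f be a fixpoint of the iteration Z_{j+1} = (Z_j \ f_1(Z_j)) ∪ f_2(f_1(Z_j)) starting at Z_0 = X (i.e., Z_f = Z_{f+1}). Then S = f_1(Z_f) is an agreement: f_1(S) = f_2(S) = S. -/
variable {α : Type*} [DecidableEq α] [Fintype α]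

theorem S_is_agreement (f₁ f₂ : Finset α → Finset α)
    (h₁ : Coherent f₁) (h₂ : Coherent f₂)
    (Z : ℕ → Finset α) (hZ0 : Z 0 = Finset.univ)
    (hZ : ∀ j, Z (j + 1) = (Z j \ f₁ (Z j)) ∪ f₂ (f₁ (Z j)))
    (F : ℕ) (hF : Z F = Z (F + 1)) :
    f₁ (f₁ (Z F)) = f₁ (Z F) ∧ f₂ (f₁ (Z F)) = f₁ (Z F) := by
  set A := Z F
  set S := f₁ A with hS
  have hfix : A = (A \ S) ∪ f₂ S := hF.trans (hZ F)
  have hSA : S ⊆ A := h₁.1 A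
  have hf₂ : f₂ S = S := by
    apply Finset.Subset.antisymm (h₂.1 S)
    intro x hx
    have hxA : x ∈ A := hSA hx
    rw [hfix] at hxA
    rcases Finset.mem_union.1 hxA with h | h
    · exact absurd hx (Finset.mem_sdiff.1 h).2
    · exact h
  have hf₁ : f₁ S = S := by
    apply Finset.Subset.antisymm (h₁.1 S)
    intro x hx
    exact h₁.2.2 A S x hSA hx hx
  exact ⟨hf₁, hf₂⟩
end
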